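/- arXiv:0801.2934 — 6 statements merged into one kernel-verified Lean document; each statement's English description precedes it below -/
import Mathlib

section
/- In the setting of the previous statement, π* is optimal among valid p-values in the following sense: if π : X → [0,1] satisfies P(π(X) ≤ α) ≤ α (X ~ P) for all α ∈ (0,1), then for every α ∈ (0,1), Q(π*(X) > α) ≤ Q(π(X) > α), where now X ~ Q. Equivalently, the test x ↦ 1{π*(x) ≤ α} maximizes power against Q among level-α tests of P. -/
open MeasureTheory ProbabilityTheory Set
open scoped ENNReal

/-!
The set `{π* ≤ α}` contains the likelihood-ratio region `A = {T ≥ c}` whose threshold `c` is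
chosen, by continuity of the law of `T`, so that `P(A) = α`. A valid `π` has rejection region
`B = {π ≤ α}` with `P(B) ≤ α = P(A)`, so the Neyman–Pearson lemma gives `Q(B) ≤ Q(A)`; passing to
complements, `Q(π* > α) ≤ Q(Aᶜ) ≤ Q(Bᶜ) = Q(π > α)`.
-/

theorem neyman_pearson {𝓧 : Type*} [MeasurableSpace 𝓧] {M : Measure 𝓧} {p q : 𝓧 → ℝ≥0∞}
    (hp : Measurable p) {k : ℝ≥0∞} {A B : Set 𝓧} (hA : MeasurableSet A) (hB : MeasurableSet B)
    (hkA : ∀ x ∈ A, k * p x ≤ q x) (hkAc : ∀ x ∉ A, q x ≤ k * p x)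
    (hBA : M.withDensity p B ≤ M.withDensity p A) (hA_ne_top : k * M.withDensity p A ≠ ∞) :
    M.withDensity q B ≤ M.withDensity q A := by
  have hkp : Measurable fun x => k * p x := hp.const_mul k
  -- `(1_B - 1_A) (q - k p) ≤ 0`, rearranged so that no subtraction occurs in `ℝ≥0∞`
  have hpointwise : ∀ x, B.indicator q x + A.indicator (fun x => k * p x) x ≤
      A.indicator q x + B.indicator (fun x => k * p x) x := by
    intro x
    by_cases hxA : x ∈ A <;> by_cases hxB : x ∈ B <;> simp [hxA, hxB, hkA, hkAc]
  have hint := lintegral_mono (μ := M) hpointwise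
  rw [lintegral_add_right _ (hkp.indicator hA), lintegral_add_right _ (hkp.indicator hB),
    lintegral_indicator hA, lintegral_indicator hB, lintegral_indicator hA,
    lintegral_indicator hB, lintegral_const_mul _ hp, lintegral_const_mul _ hp,
    ← withDensity_apply _ hA, ← withDensity_apply _ hB, ← withDensity_apply _ hA,
    ← withDensity_apply _ hB] at hint
  refine ENNReal.le_of_add_le_add_right hA_ne_top ?_
  calc M.withDensity q B + k * M.withDensity p A
      ≤ M.withDensity q A + k * M.withDensity p B := hint
    _ ≤ M.withDensity q A + k * M.withDensity p A := by gcongr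

theorem neyman_pearson_likelihoodRatio {𝓧 : Type*} [MeasurableSpace 𝓧] {M : Measure 𝓧}
    {f g : 𝓧 → ℝ} (hfpos : ∀ x, 0 < f x) (hfm : Measurable f) (hgm : Measurable g)
    [IsFiniteMeasure (M.withDensity fun x => ENNReal.ofReal (f x))] (c : ℝ) {B : Set 𝓧}
    (hB : MeasurableSet B)
    (hBA : M.withDensity (fun x => ENNReal.ofReal (f x)) B ≤
      M.withDensity (fun x => ENNReal.ofReal (f x)) {x | c ≤ g x / f x}) :
    M.withDensity (fun x => ENNReal.ofReal (g x)) B ≤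
      M.withDensity (fun x => ENNReal.ofReal (g x)) {x | c ≤ g x / f x} := by
  have hA_iff : ∀ x, c ≤ g x / f x ↔ c * f x ≤ g x := fun x => le_div_iff₀ (hfpos x)
  have hofReal_mul : ∀ x, ENNReal.ofReal c * ENNReal.ofReal (f x) = ENNReal.ofReal (c * f x) :=
    fun x => (ENNReal.ofReal_mul' (hfpos x).le).symm
  exact neyman_pearson hfm.ennreal_ofReal (measurableSet_le measurable_const (hgm.div hfm)) hB
    (fun x hx => (hofReal_mul x).trans_le (ENNReal.ofReal_le_ofReal ((hA_iff x).1 hx)))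
    (fun x hx => (ENNReal.ofReal_le_ofReal (not_le.1 ((hA_iff x).not.1 hx)).le).trans_eq
      (hofReal_mul x).symm) hBA (ENNReal.mul_ne_top ENNReal.ofReal_ne_top (measure_ne_top _ _))

theorem continuous_cdf (μ : Measure ℝ) [IsProbabilityMeasure μ] [NullSingletonClass μ] :
    Continuous (cdf μ) := by
  refine continuous_iff_continuousAt.2 fun a => ?_
  have hleft : Function.leftLim (cdf μ) a = cdf μ a := by
    have h := (cdf μ).measure_singleton a
    rw [measure_cdf, measure_singleton, eq_comm, ENNReal.ofReal_eq_zero, sub_nonpos] at h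
    exact le_antisymm ((cdf μ).mono.leftLim_le le_rfl) h
  rw [(cdf μ).mono.continuousAt_iff_leftLim_eq_rightLim, hleft, (cdf μ).rightLim_eq]

theorem exists_measure_Ici_eq (μ : Measure ℝ) [IsProbabilityMeasure μ] [NullSingletonClass μ]
    {α : ℝ} (hα : α ∈ Ioo (0 : ℝ) 1) : ∃ c, μ (Ici c) = ENNReal.ofReal α := by
  obtain ⟨c, hc⟩ : 1 - α ∈ range (cdf μ) :=
    mem_range_of_exists_le_of_exists_ge (continuous_cdf μ)
      ((tendsto_cdf_atBot μ).eventually (eventually_le_nhds (by linarith [hα.2]))).exists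
      ((tendsto_cdf_atTop μ).eventually (eventually_ge_nhds (by linarith [hα.1]))).exists
  refine ⟨c, ?_⟩
  rw [← Ioi_ae_eq_Ici.measure_eq, ← compl_Iic, prob_compl_eq_one_sub measurableSet_Iic,
    ← ofReal_measureReal, ← cdf_eq_real, hc, ← ENNReal.ofReal_one,
    ← ENNReal.ofReal_sub _ (by linarith [hα.2]), sub_sub_cancel]

theorem exists_measure_setOf_le_eq {Ω : Type*} [MeasurableSpace Ω] (P : Measure Ω)
    [IsProbabilityMeasure P] {T : Ω → ℝ} (hT : Measurable T) (hcont : ∀ c, P {x | T x = c} = 0)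
    {α : ℝ} (hα : α ∈ Ioo (0 : ℝ) 1) : ∃ c, P {x | c ≤ T x} = ENNReal.ofReal α := by
  have := Measure.isProbabilityMeasure_map (μ := P) hT.aemeasurable
  have : NullSingletonClass (P.map T) :=
    ⟨fun c => by rw [Measure.map_apply hT (measurableSet_singleton c)]; exact hcont c⟩
  obtain ⟨c, hc⟩ := exists_measure_Ici_eq (P.map T) hα
  exact ⟨c, by rwa [Measure.map_apply hT measurableSet_Ici] at hc⟩

theorem stmt2_general {𝓧 : Type*} [MeasurableSpace 𝓧]
    (M : Measure 𝓧) (f g : 𝓧 → ℝ)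
    (hfpos : ∀ x, 0 < f x)
    (hfm : Measurable f) (hgm : Measurable g)
    (P Q : Measure 𝓧)
    (hP : P = M.withDensity fun x => ENNReal.ofReal (f x))
    (hQ : Q = M.withDensity fun x => ENNReal.ofReal (g x))
    [IsProbabilityMeasure P] [IsProbabilityMeasure Q]
    (T : 𝓧 → ℝ) (hT : ∀ x, T x = g x / f x)
    (hcont : ∀ c : ℝ, P {x | T x = c} = 0)
    (πstar : 𝓧 → ℝ) (hπstar : ∀ x, πstar x = (P {z | T x ≤ T z}).toReal)
    (π : 𝓧 → ℝ) (hπm : Measurable π)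
    (hπvalid : ∀ α ∈ Set.Ioo (0:ℝ) 1, (P {x | π x ≤ α}).toReal ≤ α) :
    ∀ α ∈ Set.Ioo (0:ℝ) 1,
      (Q {x | α < πstar x}).toReal ≤ (Q {x | α < π x}).toReal := by
  intro α hα
  obtain rfl : T = fun x => g x / f x := funext hT
  obtain ⟨c, hPA⟩ := exists_measure_setOf_le_eq P (hgm.div hfm) hcont hα
  set A := {x | c ≤ g x / f x}
  set B := {x | π x ≤ α}
  have hA : MeasurableSet A := measurableSet_le measurable_const (hgm.div hfm)
  have hB : MeasurableSet B := measurableSet_le hπm measurable_const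
  have hPB : P B ≤ ENNReal.ofReal α :=
    (ENNReal.le_ofReal_iff_toReal_le (measure_ne_top _ _) hα.1.le).2 (hπvalid α hα)
  have hQBA : Q B ≤ Q A := by
    subst hP hQ
    exact neyman_pearson_likelihoodRatio hfpos hfm hgm c hB (hPB.trans hPA.ge)
  have hπstar_le : ∀ x ∈ A, πstar x ≤ α := fun x hx => by
    rw [hπstar]
    exact ENNReal.toReal_le_of_le_ofReal hα.1.le
      (hPA ▸ measure_mono fun z (hz : g x / f x ≤ g z / f z) => le_trans hx hz)
  have hQ_compl : Q {x | α < πstar x} ≤ Q {x | α < π x} :=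
    calc Q {x | α < πstar x} ≤ Q Aᶜ := measure_mono fun x hx hxA => not_le.2 hx (hπstar_le x hxA)
      _ = 1 - Q A := prob_compl_eq_one_sub hA
      _ ≤ 1 - Q B := tsub_le_tsub_left hQBA 1
      _ = Q {x | α < π x} := by
        rw [← prob_compl_eq_one_sub hB]; congr 1; ext x; exact not_le (α := ℝ)
  exact ENNReal.toReal_mono (measure_ne_top _ _) hQ_compl

/-- the oracle p-value `π*` is optimal among valid p-values:
it minimizes `Q(π(X) > α)` for every level `α`. -/
theorem stmt2 {𝓧 : Type*} [MeasurableSpace 𝓧]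
    (M : Measure 𝓧) (f g : 𝓧 → ℝ)
    (hfpos : ∀ x, 0 < f x) (hgpos : ∀ x, 0 < g x)
    (hfm : Measurable f) (hgm : Measurable g)
    (P Q : Measure 𝓧)
    (hP : P = M.withDensity fun x => ENNReal.ofReal (f x))
    (hQ : Q = M.withDensity fun x => ENNReal.ofReal (g x))
    [IsProbabilityMeasure P] [IsProbabilityMeasure Q]
    (T : 𝓧 → ℝ) (hT : ∀ x, T x = g x / f x)
    (hcont : ∀ c : ℝ, P {x | T x = c} = 0)
    (πstar : 𝓧 → ℝ) (hπstar : ∀ x, πstar x = (P {z | T x ≤ T z}).toReal)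
    (π : 𝓧 → ℝ) (hπm : Measurable π)
    (hπrange : ∀ x, π x ∈ Set.Icc (0:ℝ) 1)
    (hπvalid : ∀ α ∈ Set.Ioo (0:ℝ) 1, (P {x | π x ≤ α}).toReal ≤ α) :
    ∀ α ∈ Set.Ioo (0:ℝ) 1,
      (Q {x | α < πstar x}).toReal ≤ (Q {x | α < π x}).toReal :=
  stmt2_general M f g hfpos hfm hgm P Q hP hQ T hT hcont πstar hπstar π hπm hπvalid
end

section
/- Let Z, Z_1, ..., Z_N be exchangeable real-valued random variables (e.g. i.i.d.). Define π := (#{i : Z_i ≥ Z} + 1)/(N + 1). Then for every α ∈ (0,1), P(π ≤ α) ≤ α. -/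
/-!
Write `rankCount x j` for the number of `i ≠ j` with `x j ≤ x i`. For every `x`, at most `m` indices
`j` satisfy `rankCount x j < m`: the one among them with the smallest value is dominated by all the
others. Exchangeability makes the events `rankCount W j < m` equiprobable, so each has probability
at most `m / (N + 1)`; with `m = ⌊α (N + 1)⌋` the event for `j = 0` is exactly `π ≤ α`.
-/

open MeasureTheory Finset

section RankCount

variable {ι β : Type*} [Fintype ι] [DecidableEq ι] [LinearOrder β]

def rankCount (x : ι → β) (j : ι) : ℕ :=
  #{i | i ≠ j ∧ x j ≤ x i}

lemma rankCount_comp_perm (x : ι → β) (σ : Equiv.Perm ι) (j : ι) :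
    rankCount (x ∘ σ) j = rankCount x (σ j) :=
  card_equiv σ fun i => by simp

lemma card_rankCount_lt_le (x : ι → β) (m : ℕ) : #{j | rankCount x j < m} ≤ m := by
  set S : Finset ι := {j | rankCount x j < m}
  rcases S.eq_empty_or_nonempty with hS | hS
  · simp [hS]
  obtain ⟨j, hjS, hjmin⟩ := S.exists_min_image x hS
  have hsub : S.erase j ⊆ ({i | i ≠ j ∧ x j ≤ x i} : Finset ι) := fun i hi => by
    rw [mem_erase] at hi
    simpa using ⟨hi.1, hjmin i hi.2⟩
  calc #S = #(S.erase j) + 1 := (card_erase_add_one hjS).symm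
    _ ≤ rankCount x j + 1 := Nat.add_le_add_right (card_le_card hsub) 1
    _ ≤ m := (mem_filter.mp hjS).2

lemma rankCount_zero_eq {N : ℕ} (x : Fin (N + 1) → β) :
    rankCount x 0 = #{i : Fin N | x 0 ≤ x i.succ} := by
  rw [rankCount, card_filter, card_filter, Fin.sum_univ_succ]
  simp [Fin.succ_ne_zero]

end RankCount

open Classical in
lemma sum_measure_le_of_forall_card_le {α ι : Type*} [MeasurableSpace α] (μ : Measure α)
    {s : Finset ι} {A : ι → Set α} (hA : ∀ j ∈ s, MeasurableSet (A j)) {m : ℕ}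
    (hm : ∀ x, #{j ∈ s | x ∈ A j} ≤ m) :
    ∑ j ∈ s, μ (A j) ≤ m * μ Set.univ := by
  calc ∑ j ∈ s, μ (A j) = ∑ j ∈ s, ∫⁻ x, (A j).indicator 1 x ∂μ :=
        sum_congr rfl fun j hj => (lintegral_indicator_one (hA j hj)).symm
    _ = ∫⁻ x, ∑ j ∈ s, (A j).indicator 1 x ∂μ :=
        (lintegral_finsetSum _ fun j hj => measurable_one.indicator (hA j hj)).symm
    _ ≤ ∫⁻ _, (m : ENNReal) ∂μ := lintegral_mono fun x => by
        simp only [Set.indicator_apply, Pi.one_apply, sum_boole]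
        exact_mod_cast hm x
    _ = m * μ Set.univ := lintegral_const _

section Exchangeable

variable {ι β : Type*} [Fintype ι] [DecidableEq ι] [LinearOrder β] [MeasurableSpace β]
  [TopologicalSpace β] [OpensMeasurableSpace β] [OrderClosedTopology β] [SecondCountableTopology β]

lemma measurable_rankCount (j : ι) : Measurable fun x : ι → β => rankCount x j := by
  simp only [rankCount, card_filter]
  refine Finset.measurable_sum _ fun i _ => Measurable.ite ?_ measurable_const measurable_const
  exact (MeasurableSet.const _).inter
    (measurableSet_le (measurable_pi_apply j) (measurable_pi_apply i))

lemma measurableSet_rankCount_lt (j : ι) (m : ℕ) :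
    MeasurableSet {x : ι → β | rankCount x j < m} :=
  measurable_rankCount j measurableSet_Iio

lemma measureReal_rankCount_lt_le (μ : Measure (ι → β)) [IsProbabilityMeasure μ]
    (hμ : ∀ σ : Equiv.Perm ι, μ.map (· ∘ σ) = μ) (j : ι) (m : ℕ) :
    μ.real {x | rankCount x j < m} ≤ m / Fintype.card ι := by
  set A : ι → Set (ι → β) := fun k => {x | rankCount x k < m}
  have hA : ∀ k, MeasurableSet (A k) := fun k => measurableSet_rankCount_lt k m
  have hAk : ∀ k, μ (A k) = μ (A j) := fun k => by
    have hσ : Measurable fun x : ι → β => x ∘ Equiv.swap j k := by fun_prop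
    have : A k = (· ∘ Equiv.swap j k) ⁻¹' A j := by
      ext x; simp [A, rankCount_comp_perm]
    rw [this, ← Measure.map_apply hσ (hA j), hμ]
  have hsum : Fintype.card ι * μ (A j) ≤ m := by
    simpa [hAk] using sum_measure_le_of_forall_card_le μ (s := univ) (fun k _ => hA k)
      fun x => by convert card_rankCount_lt_le x m; rfl
  have hcard : (0 : ℝ) < Fintype.card ι := by
    exact_mod_cast Fintype.card_pos_iff.mpr ⟨j⟩
  rw [le_div_iff₀ hcard, mul_comm, measureReal_def]
  simpa using ENNReal.toReal_mono (by simp) hsum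

end Exchangeable

lemma add_one_div_le_iff_lt_floor {c N : ℕ} {α : ℝ} (hα : 0 ≤ α) :
    ((c : ℝ) + 1) / (N + 1) ≤ α ↔ c < ⌊α * (N + 1)⌋₊ := by
  rw [div_le_iff₀ (by positivity), Nat.lt_iff_add_one_le, Nat.le_floor_iff (by positivity)]
  push_cast
  rfl

/-- validity of the rank-based p-value for exchangeable
real random variables `(Z, Z_1, ..., Z_N) = (W 0, W 1, ..., W N)`. -/
theorem stmt6 {Ω : Type*} [MeasurableSpace Ω] (P : Measure Ω) [IsProbabilityMeasure P]
    {N : ℕ} (W : Ω → Fin (N + 1) → ℝ)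
    (hmeas : Measurable W)
    (hexch : ∀ σ : Equiv.Perm (Fin (N + 1)),
      Measure.map (fun ω => W ω ∘ σ) P = Measure.map W P)
    (π : Ω → ℝ)
    (hπ : ∀ ω, π ω =
      (((Finset.univ.filter fun i : Fin N => W ω 0 ≤ W ω i.succ).card : ℝ) + 1) / (N + 1)) :
    ∀ α ∈ Set.Ioo (0:ℝ) 1, (P {ω | π ω ≤ α}).toReal ≤ α := by
  rintro α ⟨hα, -⟩
  set m := ⌊α * (N + 1)⌋₊
  have hevent : {ω | π ω ≤ α} = W ⁻¹' {x | rankCount x 0 < m} := by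
    ext ω
    simp [hπ, rankCount_zero_eq, add_one_div_le_iff_lt_floor hα.le, m]
  have hinv : ∀ σ : Equiv.Perm (Fin (N + 1)), (P.map W).map (· ∘ σ) = P.map W := fun σ => by
    rw [Measure.map_map (by fun_prop) hmeas]
    exact hexch σ
  have : IsProbabilityMeasure (P.map W) := Measure.isProbabilityMeasure_map hmeas.aemeasurable
  calc (P {ω | π ω ≤ α}).toReal = (P.map W).real {x | rankCount x 0 < m} := by
        rw [hevent, measureReal_def,
          Measure.map_apply hmeas (measurableSet_rankCount_lt 0 m)]
    _ ≤ m / (N + 1) := by simpa using measureReal_rankCount_lt_le _ hinv 0 m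
    _ ≤ α := by
        rw [div_le_iff₀ (by positivity)]
        exact Nat.floor_le (by positivity)
end

section
/- Let X, X_1, ..., X_N be exchangeable random variables with values in a measurable space X, and let T : X × X^{N+1} → R be a measurable function such that T(x; x_0, x_1, ..., x_N) is invariant under permutations of (x_0, x_1, ..., x_N). Define π := (#{i ∈ {1,...,N} : T(X_i; X, X_1, ..., X_N) ≥ T(X; X, X_1, ..., X_N)} + 1)/(N+1). Then P(π ≤ α) ≤ α for every α ∈ (0,1). -/
/-!
Since `T` is symmetric in the pooled sample, the statistics `Yᵢ = T(Xᵢ; pooled sample)` form a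
permutation-equivariant function of it and are therefore exchangeable as well. The p-value is
`(N+1)⁻¹` times the number of `i` with `Y₀ ≤ Yᵢ`, the upper rank of `Y₀`. Deterministically, at
most `m` of the `N+1` coordinates can have upper rank `≤ m`; by exchangeability each of them has
the same probability of doing so, hence `P(rank of Y₀ ≤ m) ≤ m / (N+1)`.
-/

open MeasureTheory Finset

section UpperCount

variable {ι α : Type*} [Fintype ι] [LinearOrder α]

def upperCount (y : ι → α) (j : ι) : ℕ := #{i | y j ≤ y i}

theorem card_filter_upperCount_le (y : ι → α) (m : ℕ) : #{j | upperCount y j ≤ m} ≤ m := by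
  set S : Finset ι := {j | upperCount y j ≤ m}
  rcases S.eq_empty_or_nonempty with hS | hS
  · simp [hS]
  -- every coordinate of `S` is at least the smallest one, `y j`
  obtain ⟨j, hjS, hj_min⟩ := S.exists_min_image y hS
  have hS_sub : S ⊆ ({i | y j ≤ y i} : Finset ι) := fun i hi => by simpa using hj_min i hi
  exact (card_le_card hS_sub).trans (mem_filter.1 hjS).2

theorem upperCount_comp_perm (y : ι → α) (σ : Equiv.Perm ι) (j : ι) :
    upperCount (y ∘ σ) j = upperCount y (σ j) :=
  card_equiv σ (by simp)

theorem measurable_upperCount [TopologicalSpace α] [OrderClosedTopology α]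
    [SecondCountableTopology α] [MeasurableSpace α] [OpensMeasurableSpace α] (j : ι) :
    Measurable fun y : ι → α => upperCount y j := by
  simp only [upperCount, card_filter]
  exact Finset.measurable_sum _ fun i _ => Measurable.ite
    (measurableSet_le (measurable_pi_apply j) (measurable_pi_apply i)) measurable_const
    measurable_const

end UpperCount

open Classical in
theorem sum_measure_le_of_forall_card_le_s7 {Ω ι : Type*} [MeasurableSpace Ω] [Fintype ι]
    (μ : Measure Ω) {E : ι → Set Ω} (hE : ∀ k, MeasurableSet (E k)) {m : ℕ}
    (hm : ∀ ω, #{k | ω ∈ E k} ≤ m) : ∑ k, μ (E k) ≤ m * μ Set.univ := by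
  calc ∑ k, μ (E k) = ∫⁻ ω, ∑ k, (E k).indicator 1 ω ∂μ := by
        rw [lintegral_finsetSum _ fun k _ => measurable_one.indicator (hE k)]
        simp_rw [lintegral_indicator_one (hE _)]
    _ = ∫⁻ ω, (#{k | ω ∈ E k} : ENNReal) ∂μ := by
        simp_rw [Set.indicator_apply, Pi.one_apply, sum_boole]
    _ ≤ ∫⁻ _, (m : ENNReal) ∂μ := lintegral_mono fun ω => Nat.cast_le.2 (by convert hm ω)
    _ = m * μ Set.univ := lintegral_const _

section Exchangeable

variable {Ω ι β γ : Type*} [MeasurableSpace Ω] [MeasurableSpace β] [MeasurableSpace γ]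

def Exchangeable (P : Measure Ω) (Y : Ω → ι → β) : Prop :=
  ∀ σ : Equiv.Perm ι, P.map (fun ω => Y ω ∘ σ) = P.map Y

variable {P : Measure Ω} {Y : Ω → ι → β}

theorem Exchangeable.comp_equivariant (hY : Measurable Y) (h : Exchangeable P Y)
    {f : (ι → β) → (ι → γ)} (hf : Measurable f)
    (hfσ : ∀ (σ : Equiv.Perm ι) v, f (v ∘ σ) = f v ∘ σ) :
    Exchangeable P (fun ω => f (Y ω)) := by
  intro σ
  have hYσ : Measurable fun ω => Y ω ∘ σ := by fun_prop
  calc P.map (fun ω => f (Y ω) ∘ σ) = (P.map fun ω => Y ω ∘ σ).map f := by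
        rw [Measure.map_map hf hYσ]
        exact congrArg P.map (funext fun ω => (hfσ σ (Y ω)).symm)
    _ = P.map (fun ω => f (Y ω)) := by rw [h σ, Measure.map_map hf hY]; rfl

theorem Exchangeable.measure_preimage_comp_perm (hY : Measurable Y) (h : Exchangeable P Y)
    (σ : Equiv.Perm ι) {B : Set (ι → β)} (hB : MeasurableSet B) :
    P ((fun ω => Y ω ∘ σ) ⁻¹' B) = P (Y ⁻¹' B) := by
  have hYσ : Measurable fun ω => Y ω ∘ σ := by fun_prop
  rw [← Measure.map_apply hYσ hB, h σ, Measure.map_apply hY hB]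

end Exchangeable

section Rank

variable {Ω ι α : Type*} [MeasurableSpace Ω] [Fintype ι] [LinearOrder α] [TopologicalSpace α]
  [OrderClosedTopology α] [SecondCountableTopology α] [MeasurableSpace α] [OpensMeasurableSpace α]
  {P : Measure Ω} [IsProbabilityMeasure P] {Y : Ω → ι → α}

theorem Exchangeable.card_mul_measure_upperCount_le (hY : Measurable Y) (h : Exchangeable P Y)
    (j : ι) (m : ℕ) : Fintype.card ι * P {ω | upperCount (Y ω) j ≤ m} ≤ m := by
  have hE : ∀ k, MeasurableSet {y : ι → α | upperCount y k ≤ m} := fun k =>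
    measurableSet_le (measurable_upperCount k) measurable_const
  have h_eq : ∀ k, P {ω | upperCount (Y ω) k ≤ m} = P {ω | upperCount (Y ω) j ≤ m} := by
    classical
    intro k
    calc P {ω | upperCount (Y ω) k ≤ m}
        = P ((fun ω => Y ω ∘ Equiv.swap j k) ⁻¹' {y | upperCount y j ≤ m}) := by
          simp [Set.preimage, upperCount_comp_perm]
      _ = _ := h.measure_preimage_comp_perm hY _ (hE j)
  calc (Fintype.card ι : ENNReal) * P {ω | upperCount (Y ω) j ≤ m}
      = ∑ k, P {ω | upperCount (Y ω) k ≤ m} := by simp [h_eq]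
    _ ≤ m * P Set.univ := sum_measure_le_of_forall_card_le_s7 P (fun k => hY (hE k)) fun ω => by
        convert card_filter_upperCount_le (Y ω) m using 3
        rfl
    _ = m := by simp

theorem Exchangeable.measureReal_upperCount_le [Nonempty ι] (hY : Measurable Y)
    (h : Exchangeable P Y) (j : ι) {t : ℝ} (ht : 0 ≤ t) :
    P.real {ω | (upperCount (Y ω) j : ℝ) ≤ t} ≤ t / Fintype.card ι := by
  have hset : {ω | (upperCount (Y ω) j : ℝ) ≤ t} = {ω | upperCount (Y ω) j ≤ ⌊t⌋₊} := by
    ext ω; exact (Nat.le_floor_iff ht).symm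
  rw [hset, le_div_iff₀' (Nat.cast_pos.2 Fintype.card_pos)]
  calc (Fintype.card ι : ℝ) * P.real {ω | upperCount (Y ω) j ≤ ⌊t⌋₊}
      = ((Fintype.card ι : ENNReal) * P {ω | upperCount (Y ω) j ≤ ⌊t⌋₊}).toReal := by
        simp [measureReal_def]
    _ ≤ (⌊t⌋₊ : ENNReal).toReal :=
        ENNReal.toReal_mono (by simp) (h.card_mul_measure_upperCount_le hY j _)
    _ ≤ t := by simpa using Nat.floor_le ht

end Rank

/-- validity of the permutation p-value based on a test statistic
`T` that is symmetric in the pooled sample `(X, X_1, ..., X_N) = (W 0, ..., W N)`. -/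
theorem stmt7 {Ω 𝓧 : Type*} [MeasurableSpace Ω] [MeasurableSpace 𝓧]
    (P : Measure Ω) [IsProbabilityMeasure P]
    {N : ℕ} (W : Ω → Fin (N + 1) → 𝓧)
    (hmeas : Measurable W)
    (hexch : ∀ σ : Equiv.Perm (Fin (N + 1)),
      Measure.map (fun ω => W ω ∘ σ) P = Measure.map W P)
    (T : 𝓧 → (Fin (N + 1) → 𝓧) → ℝ)
    (hTmeas : Measurable fun p : 𝓧 × (Fin (N + 1) → 𝓧) => T p.1 p.2)
    (hTsym : ∀ (x : 𝓧) (v : Fin (N + 1) → 𝓧) (σ : Equiv.Perm (Fin (N + 1))),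
      T x (v ∘ σ) = T x v)
    (π : Ω → ℝ)
    (hπ : ∀ ω, π ω =
      (((Finset.univ.filter fun i : Fin N =>
          T (W ω 0) (W ω) ≤ T (W ω i.succ) (W ω)).card : ℝ) + 1) / (N + 1)) :
    ∀ α ∈ Set.Ioo (0:ℝ) 1, (P {ω | π ω ≤ α}).toReal ≤ α := by
  rintro α ⟨hα0, -⟩
  set Y : Ω → Fin (N + 1) → ℝ := fun ω i => T (W ω i) (W ω)
  have hT_pooled : Measurable fun v : Fin (N + 1) → 𝓧 => fun i => T (v i) v :=
    measurable_pi_lambda _ fun i =>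
      hTmeas.comp (g := fun p => T p.1 p.2) ((measurable_pi_apply i).prodMk measurable_id)
  have hY_exch : Exchangeable P Y := Exchangeable.comp_equivariant hmeas hexch hT_pooled
    fun σ v => funext fun i => hTsym (v (σ i)) v σ
  have hπ_le : ∀ ω, π ω ≤ α ↔ (upperCount (Y ω) 0 : ℝ) ≤ α * (N + 1) := by
    intro ω
    rw [hπ ω, div_le_iff₀ (by positivity), upperCount, Fin.card_filter_univ_succ, if_pos le_rfl]
    push_cast
    rfl
  calc (P {ω | π ω ≤ α}).toReal
      = P.real {ω | (upperCount (Y ω) 0 : ℝ) ≤ α * (N + 1)} := by simp only [hπ_le]; rfl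
    _ ≤ α * (N + 1) / Fintype.card (Fin (N + 1)) :=
        hY_exch.measureReal_upperCount_le (hT_pooled.comp hmeas) 0 (by positivity)
    _ = α := by field_simp; simp
end

section
/- Let Q_1, ..., Q_L be mutually absolutely continuous probability distributions on X. Suppose p-value functions π_θ(x, D), depending on a new feature x and training data D, satisfy: for every permutation σ of {1,...,L}, when the class-conditional distributions are P_b = Q_{σ(b)}, one has P(π_θ(X, D) ≤ α | Y = θ, D) ≤ α almost surely. Then for the original assignment P_b = Q_b and every class b ∈ {1,...,L}, P(π_θ(X, D) ≤ α | Y = b, D) ≤ α almost surely. (Lemma 3.4: no nontrivial power is possible under conditional validity for all permutations.) -/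
open MeasureTheory

lemma pi_ac_aux : ∀ {n : ℕ} {𝓧 : Type*} [MeasurableSpace 𝓧] (μ ν : Fin n → Measure 𝓧),
    (∀ i, IsProbabilityMeasure (μ i)) → (∀ i, IsProbabilityMeasure (ν i)) →
    (∀ i, μ i ≪ ν i) → Measure.pi μ ≪ Measure.pi ν := by
  intro n
  induction n with
  | zero =>
    intro 𝓧 _ μ ν _ _ _
    rw [Measure.pi_of_empty, Measure.pi_of_empty]
  | succ n ih =>
    intro 𝓧 _ μ ν hμ hν h
    have hμi := hμ; have hνi := hν
    haveI : ∀ i, IsProbabilityMeasure (μ i) := hμ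
    haveI : ∀ i, IsProbabilityMeasure (ν i) := hν
    have e := MeasurableEquiv.piFinSuccAbove (fun _ : Fin (n+1) => 𝓧) 0
    have h1 := (measurePreserving_piFinSuccAbove μ 0).map_eq
    have h2 := (measurePreserving_piFinSuccAbove ν 0).map_eq
    have htail : Measure.pi (fun j => μ ((0:Fin (n+1)).succAbove j)) ≪
        Measure.pi (fun j => ν ((0:Fin (n+1)).succAbove j)) :=
      ih _ _ (fun j => hμ _) (fun j => hν _) (fun j => h _)
    have hprod : (μ 0).prod (Measure.pi fun j => μ ((0:Fin (n+1)).succAbove j)) ≪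
        (ν 0).prod (Measure.pi fun j => ν ((0:Fin (n+1)).succAbove j)) :=
      (h 0).prod htail
    have hμeq : Measure.pi μ = Measure.map (MeasurableEquiv.piFinSuccAbove (fun _ : Fin (n+1) => 𝓧) 0).symm
        ((μ 0).prod (Measure.pi fun j => μ ((0:Fin (n+1)).succAbove j))) := by
      rw [← h1, Measure.map_map (MeasurableEquiv.measurable _) (MeasurableEquiv.measurable _)]
      simp
    have hνeq : Measure.pi ν = Measure.map (MeasurableEquiv.piFinSuccAbove (fun _ : Fin (n+1) => 𝓧) 0).symm
        ((ν 0).prod (Measure.pi fun j => ν ((0:Fin (n+1)).succAbove j))) := by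
      rw [← h2, Measure.map_map (MeasurableEquiv.measurable _) (MeasurableEquiv.measurable _)]
      simp
    rw [hμeq, hνeq]
    exact hprod.map (MeasurableEquiv.measurable _)

/-- Lemma 3.4: if the p-value `π_θ` is conditionally valid for
every permuted assignment of the mutually absolutely continuous distributions
`Q_1, ..., Q_L` to the classes, then it is conditionally valid under every
class `b`, i.e. it has no nontrivial power. -/
theorem stmt9 {𝓧 : Type*} [MeasurableSpace 𝓧] {L n : ℕ}
    (Q : Fin L → Measure 𝓧) [∀ b, IsProbabilityMeasure (Q b)]
    (habs : ∀ b c, Q b ≪ Q c)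
    (Y : Fin n → Fin L)
    (π : Fin L → 𝓧 → (Fin n → 𝓧) → ℝ)
    (hπmeas : ∀ θ, Measurable fun p : 𝓧 × (Fin n → 𝓧) => π θ p.1 p.2)
    (θ : Fin L) (α : ℝ) (hα : α ∈ Set.Ioo (0:ℝ) 1)
    (hvalid : ∀ σ : Equiv.Perm (Fin L),
      ∀ᵐ D ∂(Measure.pi fun i => Q (σ (Y i))),
        Q (σ θ) {x | π θ x D ≤ α} ≤ ENNReal.ofReal α) :
    ∀ b : Fin L,
      ∀ᵐ D ∂(Measure.pi fun i => Q (Y i)),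
        Q b {x | π θ x D ≤ α} ≤ ENNReal.ofReal α := by
  intro b
  have h := hvalid (Equiv.swap θ b)
  rw [Equiv.swap_apply_left] at h
  have hac : (Measure.pi fun i => Q (Y i)) ≪ (Measure.pi fun i => Q ((Equiv.swap θ b) (Y i))) :=
    pi_ac_aux _ _ (fun i => inferInstance) (fun i => inferInstance) (fun i => habs _ _)
  exact hac.ae_le h
end

section
/- Let M be Lebesgue measure on X = X_1 × ... × X_q with open intervals X_k ⊂ R, and let (g_ξ)_{ξ∈Ξ} be strictly positive probability densities such that: (i) any finite family of distinct g_ξ is linearly independent in L¹(M) (identifiability), and (ii) for each ξ, k, and fixed coordinates x_i (i ≠ k), the map t ↦ g_ξ(x_1,...,x_{k−1},t,x_{k+1},...,x_q) extends to a holomorphic function on an open subset of C containing X_k. Then the family is locally identifiable: for distinct ξ(1),...,ξ(m) ∈ Ξ and reals β_1,...,β_m, if Leb_q{x ∈ X : Σ_j β_j g_{ξ(j)}(x) = 0} > 0 then β_1 = ... = β_m = 0. -/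
open MeasureTheory Filter Set Topology Function TopologicalSpace

/-!
The zero set of `h = ∑ⱼ βⱼ g_{ξ(j)}` in the box is measurable because `h` is separately
continuous there. If it has positive measure, Fubini gives a set of first coordinates `t` of
positive measure whose slices have positive measure; by induction on the dimension, `h(t, ·)`
vanishes on the box for each such `t`. For fixed remaining coordinates, `t ↦ h(t, ·)` then
vanishes on an uncountable set, which has an accumulation point in itself, so the identity
theorem for its holomorphic extension makes it vanish on the whole interval. Hence `h = 0` on
the box, and identifiability forces `β = 0`.
-/

theorem exists_mem_neBot_nhdsWithin_Ioi_of_not_countable {α : Type*} [LinearOrder α]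
    [TopologicalSpace α] [OrderTopology α] [SecondCountableTopology α] {S : Set α}
    (hS : ¬ S.Countable) : ∃ x ∈ S, (𝓝[S ∩ Ioi x] x).NeBot := by
  obtain ⟨x, hxS, hx⟩ :=
    nonempty_of_not_subset fun h => hS (countable_setOfPred_isolated_right_within.mono h)
  exact ⟨x, hxS, ⟨fun h => hx ⟨hxS, h⟩⟩⟩

def HasHolomorphicExtension (φ : ℝ → ℝ) (A : Set ℝ) : Prop :=
  ∃ (U : Set ℂ) (F : ℂ → ℂ), IsOpen U ∧ Complex.ofReal '' A ⊆ U ∧ DifferentiableOn ℂ F U ∧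
    ∀ t ∈ A, F t = φ t

namespace HasHolomorphicExtension

variable {φ ψ : ℝ → ℝ} {A : Set ℝ}

theorem zero : HasHolomorphicExtension 0 A :=
  ⟨univ, 0, isOpen_univ, subset_univ _, differentiableOn_const 0, fun _ _ => by simp⟩

theorem add (hφ : HasHolomorphicExtension φ A) (hψ : HasHolomorphicExtension ψ A) :
    HasHolomorphicExtension (φ + ψ) A := by
  obtain ⟨U, F, hU, hAU, hF, hFφ⟩ := hφ
  obtain ⟨V, G, hV, hAV, hG, hGψ⟩ := hψ
  refine ⟨U ∩ V, F + G, hU.inter hV, subset_inter hAU hAV,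
    (hF.mono inter_subset_left).add (hG.mono inter_subset_right), fun t ht => ?_⟩
  simp [hFφ t ht, hGψ t ht]

theorem const_mul (c : ℝ) (hφ : HasHolomorphicExtension φ A) :
    HasHolomorphicExtension (fun t => c * φ t) A := by
  obtain ⟨U, F, hU, hAU, hF, hFφ⟩ := hφ
  exact ⟨U, fun z => c * F z, hU, hAU, hF.const_mul _, fun t ht => by simp [hFφ t ht]⟩

theorem finset_sum {ι : Type*} (s : Finset ι) {φ : ι → ℝ → ℝ}
    (hφ : ∀ i ∈ s, HasHolomorphicExtension (φ i) A) :
    HasHolomorphicExtension (fun t => ∑ i ∈ s, φ i t) A := by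
  classical
  induction s using Finset.induction_on with
  | empty => simp only [Finset.sum_empty]; exact zero
  | insert i s hi ih =>
    simp_rw [Finset.sum_insert hi]
    exact (hφ i (s.mem_insert_self i)).add (ih fun j hj => hφ j (Finset.mem_insert_of_mem hj))

theorem continuousOn (hφ : HasHolomorphicExtension φ A) : ContinuousOn φ A := by
  obtain ⟨U, F, -, hAU, hF, hFφ⟩ := hφ
  have hFA : ContinuousOn (fun t : ℝ => (F t).re) A :=
    Complex.continuous_re.comp_continuousOn (hF.continuousOn.comp
      Complex.continuous_ofReal.continuousOn fun t ht => hAU (mem_image_of_mem _ ht))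
  exact hFA.congr fun t ht => by simp [hFφ t ht]

theorem eqOn_zero_of_not_countable (hφ : HasHolomorphicExtension φ A) (hA : A.OrdConnected)
    {S : Set ℝ} (hSA : S ⊆ A) (hS : ¬ S.Countable) (hφS : EqOn φ 0 S) : EqOn φ 0 A := by
  obtain ⟨U, F, hU, hAU, hF, hFφ⟩ := hφ
  obtain ⟨x, hxS, hx⟩ := exists_mem_neBot_nhdsWithin_Ioi_of_not_countable hS
  have hxU : (x : ℂ) ∈ U := hAU (mem_image_of_mem _ (hSA hxS))
  have hofReal : Tendsto Complex.ofReal (𝓝[S ∩ Ioi x] x) (𝓝[≠] (x : ℂ)) := by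
    refine tendsto_nhdsWithin_of_tendsto_nhds_of_eventually_within _
      (Complex.continuous_ofReal.continuousWithinAt) ?_
    filter_upwards [self_mem_nhdsWithin] with t ht
    exact fun h => (ne_of_gt ht.2) (Complex.ofReal_injective h)
  have hfreq : ∃ᶠ z in 𝓝[≠] (x : ℂ), F z = 0 := by
    refine hofReal.frequently (Eventually.frequently ?_)
    filter_upwards [self_mem_nhdsWithin] with t ht
    rw [hFφ t (hSA ht.1), hφS ht.1, Pi.zero_apply, Complex.ofReal_zero]
  have hFW : EqOn F 0 (connectedComponentIn U x) :=
    ((hF.analyticOnNhd hU).mono (connectedComponentIn_subset U _))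
      |>.eqOn_zero_of_preconnected_of_frequently_eq_zero isPreconnected_connectedComponentIn
        (mem_connectedComponentIn hxU) hfreq
  have hAW : Complex.ofReal '' A ⊆ connectedComponentIn U x :=
    (hA.isPreconnected.image _ Complex.continuous_ofReal.continuousOn).subset_connectedComponentIn
      (mem_image_of_mem _ (hSA hxS)) hAU
  intro t ht
  have := hFW (hAW (mem_image_of_mem _ ht))
  rwa [hFφ t ht, Pi.zero_apply, Complex.ofReal_eq_zero] at this

end HasHolomorphicExtension

theorem measurable_of_continuous_update {β : Type*} [TopologicalSpace β]
    [PseudoMetrizableSpace β] [MeasurableSpace β] [BorelSpace β] {n : ℕ} {X : Fin n → Type*}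
    [∀ i, TopologicalSpace (X i)] [∀ i, MetrizableSpace (X i)] [∀ i, SecondCountableTopology (X i)]
    [∀ i, MeasurableSpace (X i)] [∀ i, BorelSpace (X i)] {f : (∀ i, X i) → β}
    (hf : ∀ k y, Continuous fun s => f (update y k s)) : Measurable f := by
  induction n with
  | zero => exact measurable_const' fun x y => congrArg f (Subsingleton.elim x y)
  | succ n ih =>
    set u : X 0 → (∀ i : Fin n, X i.succ) → β := fun a w => f (Fin.cons a w)
    have hu_cont : ∀ w, Continuous fun a => u a w := fun w =>
      continuous_iff_continuousAt.2 fun a => by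
        simpa only [u, Fin.update_cons_zero] using (hf 0 (Fin.cons a w)).continuousAt
    have hu_meas : ∀ a, Measurable (u a) := fun a =>
      ih fun k w => by simpa only [u, Fin.cons_update] using hf k.succ (Fin.cons a w)
    have hf_eq : f = uncurry u ∘ fun x => (x 0, Fin.tail x) := by
      funext x
      simp [u, Fin.cons_self_tail]
    rw [hf_eq]
    exact (measurable_uncurry_of_continuous_of_measurable hu_cont hu_meas).comp
      ((measurable_pi_apply 0).prodMk (measurable_pi_lambda _ fun i => measurable_pi_apply _))

theorem measurableSet_univ_pi_inter_preimage {n : ℕ} {I : Fin n → Set ℝ}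
    (hI : ∀ k, IsOpen (I k)) {f : (Fin n → ℝ) → ℝ}
    (hf : ∀ k, ∀ x ∈ univ.pi I, ContinuousOn (fun t => f (update x k t)) (I k))
    {s : Set ℝ} (hs : MeasurableSet s) : MeasurableSet (univ.pi I ∩ f ⁻¹' s) := by
  have : ∀ i, PolishSpace (I i) := fun i => (hI i).polishSpace
  let incl : (∀ i, I i) → Fin n → ℝ := fun y i => y i
  have hincl : MeasurableEmbedding incl :=
    (continuous_pi fun i => continuous_subtype_val.comp (continuous_apply i)).measurableEmbedding
      fun y z h => funext fun i => Subtype.ext (congrFun h i)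
  have hf_incl : Measurable (f ∘ incl) := measurable_of_continuous_update fun k y => by
    have h := (hf k (incl y) fun i _ => (y i).2).domRestrict
    convert h using 2 with s
    exact congrArg f (funext fun j => apply_update (fun _ => Subtype.val) y k s j)
  have himage : univ.pi I ∩ f ⁻¹' s = incl '' ((f ∘ incl) ⁻¹' s) := by
    ext x
    constructor
    · rintro ⟨hx, hfx⟩
      exact ⟨fun i => ⟨x i, hx i (mem_univ i)⟩, hfx, rfl⟩
    · rintro ⟨y, hy, rfl⟩
      exact ⟨fun i _ => (y i).2, hy⟩
  rw [himage]
  exact hincl.measurableSet_image' (hf_incl hs)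

theorem Fin.cons_mem_univ_pi_iff {n : ℕ} {α : Fin (n + 1) → Type*} {I : ∀ i, Set (α i)}
    {a : α 0} {w : ∀ i : Fin n, α i.succ} :
    Fin.cons a w ∈ univ.pi I ↔ a ∈ I 0 ∧ w ∈ univ.pi fun i : Fin n => I i.succ := by
  simp only [mem_univ_pi, Fin.forall_fin_succ, Fin.cons_zero, Fin.cons_succ]

theorem measurable_finCons {n : ℕ} {α : Fin (n + 1) → Type*} [∀ i, MeasurableSpace (α i)]
    (a : α 0) : Measurable (Fin.cons a : (∀ i : Fin n, α i.succ) → ∀ i, α i) :=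
  measurable_pi_iff.2 fun i => Fin.cases (by simp)
    (fun j => by simpa using measurable_pi_apply j) i

theorem volume_setOf_volume_cons_ne_zero {α : Type*} [MeasureSpace α]
    [SigmaFinite (volume : Measure α)] {n : ℕ} {Z : Set (Fin (n + 1) → α)}
    (hZ : MeasurableSet Z) (hvol : volume Z ≠ 0) :
    volume {t : α | volume {w : Fin n → α | Fin.cons t w ∈ Z} ≠ 0} ≠ 0 := by
  let e := MeasurableEquiv.piFinSuccAbove (fun _ : Fin (n + 1) => α) 0
  have he : MeasurePreserving e.symm (volume.prod volume) volume :=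
    (volume_preserving_piFinSuccAbove (fun _ : Fin (n + 1) => α) 0).symm e
  have hZ' : MeasurableSet (e.symm ⁻¹' Z) := e.symm.measurable hZ
  rw [← he.measure_preimage hZ.nullMeasurableSet, Ne, Measure.measure_prod_null hZ'] at hvol
  have hslice : ∀ t, Prod.mk t ⁻¹' (e.symm ⁻¹' Z) = {w | Fin.cons t w ∈ Z} := fun t => by
    ext w
    simp only [mem_preimage, e, MeasurableEquiv.piFinSuccAbove_symm_apply,
      Fin.insertNthEquiv_zero]
    rfl
  simpa only [EventuallyEq, ae_iff, hslice, Pi.zero_apply] using hvol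

theorem eqOn_zero_of_separatelyHolomorphic_of_volume_ne_zero {n : ℕ} {I : Fin n → Set ℝ}
    (hI : ∀ k, (I k).OrdConnected) {f : (Fin n → ℝ) → ℝ}
    (hf : ∀ k, ∀ x ∈ univ.pi I, HasHolomorphicExtension (fun t => f (update x k t)) (I k))
    (hZ : MeasurableSet {x ∈ univ.pi I | f x = 0})
    (hvol : volume {x ∈ univ.pi I | f x = 0} ≠ 0) : EqOn f 0 (univ.pi I) := by
  induction n with
  | zero =>
    obtain ⟨y, -, hy⟩ := nonempty_of_measure_ne_zero hvol
    intro x _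
    rwa [Subsingleton.elim x y]
  | succ n ih =>
    set T := {t : ℝ | volume {w : Fin n → ℝ | Fin.cons t w ∈ {x ∈ univ.pi I | f x = 0}} ≠ 0}
    have hT : volume T ≠ 0 := volume_setOf_volume_cons_ne_zero hZ hvol
    have hTI : T ⊆ I 0 := fun t ht => by
      obtain ⟨w, hw, -⟩ := nonempty_of_measure_ne_zero ht
      exact (Fin.cons_mem_univ_pi_iff.1 hw).1
    have hslice : ∀ t ∈ T, EqOn (fun w => f (Fin.cons t w)) 0 (univ.pi fun i => I i.succ) := by
      intro t ht
      have hslice_eq : {w ∈ univ.pi (fun i => I i.succ) | f (Fin.cons t w) = 0} =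
          {w : Fin n → ℝ | Fin.cons t w ∈ {x ∈ univ.pi I | f x = 0}} := by
        ext w
        simp only [mem_ofPred_eq, Fin.cons_mem_univ_pi_iff, hTI ht, true_and]
      refine ih (fun k => hI k.succ) (fun k w hw => ?_) ?_ (hslice_eq ▸ ht)
      · simpa only [Fin.cons_update] using
          hf k.succ (Fin.cons t w) (Fin.cons_mem_univ_pi_iff.2 ⟨hTI ht, hw⟩)
      · rw [hslice_eq]
        exact measurable_finCons t hZ
    obtain ⟨t₀, ht₀⟩ := nonempty_of_measure_ne_zero hT
    intro x hx
    obtain ⟨a, w, rfl⟩ : ∃ a w, x = Fin.cons a w := ⟨x 0, Fin.tail x, (Fin.cons_self_tail x).symm⟩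
    obtain ⟨ha, hw⟩ := Fin.cons_mem_univ_pi_iff.1 hx
    have hline : EqOn (fun t => f (Fin.cons t w)) 0 (I 0) := by
      simpa only [Fin.update_cons_zero] using
        (hf 0 (Fin.cons t₀ w) (Fin.cons_mem_univ_pi_iff.2 ⟨hTI ht₀, hw⟩)).eqOn_zero_of_not_countable
          (hI 0) hTI (fun hc => hT (hc.measure_zero _)) fun t ht => by
            simpa only [Fin.update_cons_zero, Pi.zero_apply] using hslice t ht hw
    exact hline ha

theorem stmt10_general {Ξ : Type*} {q : ℕ}
    (I : Fin q → Set ℝ)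
    (hIopen : ∀ k, IsOpen (I k))
    (hIconn : ∀ k, (I k).OrdConnected)
    (g : Ξ → (Fin q → ℝ) → ℝ)
    (hident : ∀ (m : ℕ) (ξ : Fin m → Ξ), Function.Injective ξ →
      ∀ β : Fin m → ℝ,
        (∀ᵐ x ∂(volume.restrict (Set.univ.pi I)), ∑ j, β j * g (ξ j) x = 0) →
        ∀ j, β j = 0)
    (hholo : ∀ (ξ : Ξ) (k : Fin q) (x : Fin q → ℝ),
      ∃ (U : Set ℂ) (F : ℂ → ℂ), IsOpen U ∧ (Complex.ofReal '' I k) ⊆ U ∧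
        DifferentiableOn ℂ F U ∧
        ∀ t ∈ I k, F (t : ℂ) = (g ξ (Function.update x k t) : ℂ)) :
    ∀ (m : ℕ) (ξ : Fin m → Ξ), Function.Injective ξ →
      ∀ β : Fin m → ℝ,
        0 < volume {x ∈ Set.univ.pi I | ∑ j, β j * g (ξ j) x = 0} →
        ∀ j, β j = 0 := by
  intro m ξ hξ β hvol
  set h : (Fin q → ℝ) → ℝ := fun x => ∑ j, β j * g (ξ j) x
  have hh : ∀ k, ∀ x ∈ univ.pi I, HasHolomorphicExtension (fun t => h (update x k t)) (I k) :=
    fun k x _ => .finset_sum _ fun j _ => HasHolomorphicExtension.const_mul (β j) (hholo (ξ j) k x)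
  have hZ : MeasurableSet {x ∈ univ.pi I | h x = 0} :=
    measurableSet_univ_pi_inter_preimage hIopen (fun k x hx => (hh k x hx).continuousOn)
      (measurableSet_singleton 0)
  have hzero : EqOn h 0 (univ.pi I) :=
    eqOn_zero_of_separatelyHolomorphic_of_volume_ne_zero hIconn hh hZ hvol.ne'
  exact hident m ξ hξ β <|
    (ae_restrict_iff' (MeasurableSet.univ_pi fun k => (hIopen k).measurableSet)).2
      (ae_of_all _ hzero)

/-- Theorem 5.1: identifiability plus coordinatewise holomorphic
extendability implies local identifiability. -/
theorem stmt10 {Ξ : Type*} {q : ℕ}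
    (I : Fin q → Set ℝ)
    (hIopen : ∀ k, IsOpen (I k))
    (hIconn : ∀ k, (I k).OrdConnected)
    (hInonempty : ∀ k, (I k).Nonempty)
    (g : Ξ → (Fin q → ℝ) → ℝ)
    (hpos : ∀ ξ x, 0 < g ξ x)
    (hident : ∀ (m : ℕ) (ξ : Fin m → Ξ), Function.Injective ξ →
      ∀ β : Fin m → ℝ,
        (∀ᵐ x ∂(volume.restrict (Set.univ.pi I)), ∑ j, β j * g (ξ j) x = 0) →
        ∀ j, β j = 0)
    (hholo : ∀ (ξ : Ξ) (k : Fin q) (x : Fin q → ℝ),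
      ∃ (U : Set ℂ) (F : ℂ → ℂ), IsOpen U ∧ (Complex.ofReal '' I k) ⊆ U ∧
        DifferentiableOn ℂ F U ∧
        ∀ t ∈ I k, F (t : ℂ) = (g ξ (Function.update x k t) : ℂ)) :
    ∀ (m : ℕ) (ξ : Fin m → Ξ), Function.Injective ξ →
      ∀ β : Fin m → ℝ,
        0 < volume {x ∈ Set.univ.pi I | ∑ j, β j * g (ξ j) x = 0} →
        ∀ j, β j = 0 :=
  stmt10_general I hIopen hIconn g hident hholo
end

section
/- Let π_θ* be the optimal p-value and τ_θ the typicality index, both defined relative to densities f_1,...,f_L > 0 and prior weights w_1,...,w_L > 0, and for w_0 > 0 define the compromise p-value π̃_θ^{w_0}(x) := P_θ{z : (f_θ/(f + w_0))(z) ≤ (f_θ/(f + w_0))(x)} where f = Σ_b w_b f_b. Suppose the laws of f_θ(X)/f(X), of f_θ(X), and of f_θ(X)/(f(X)+w_0) under X ~ P_θ are continuous. Then for each fixed x: π̃_θ^{w_0}(x) → τ_θ(x) as w_0 → ∞, and π̃_θ^{w_0}(x) → π_θ*(x) as w_0 → 0 (along points of continuity), by dominated convergence applied to the indicator comparisons.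 -/
/-!
For fixed `x` and every `z` off a tie set, the comparison
`f θ z / (fbar z + w) ≤ f θ x / (fbar x + w)` is eventually (in `w`) equivalent to the limiting
comparison, because a strict inequality between the limits persists: as `w → 0⁺` the two sides
tend to `f θ z / fbar z` and `f θ x / fbar x`, and as `w → ∞`, after multiplying by `w`, to
`f θ z` and `f θ x`. The tie sets are `Pθ`-null by continuity of the laws, so the events converge
almost surely and dominated convergence of their indicators gives the convergence of probabilities.
-/

open MeasureTheory Filter Topology

theorem Filter.Tendsto.eventually_le_iff {α ι : Type*} [TopologicalSpace α] [LinearOrder α]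
    [OrderClosedTopology α] {l : Filter ι} {u v : ι → α} {a b : α}
    (hu : Tendsto u l (𝓝 a)) (hv : Tendsto v l (𝓝 b)) (hab : a ≠ b) :
    ∀ᶠ i in l, (u i ≤ v i ↔ a ≤ b) := by
  rcases hab.lt_or_gt with h | h
  · filter_upwards [hu.eventually_lt hv h] with i hi
    exact iff_of_true hi.le h.le
  · filter_upwards [hv.eventually_lt hu h] with i hi
    exact iff_of_false hi.not_ge h.not_ge

theorem MeasureTheory.tendsto_measure_toReal_of_ae_eventually_mem_iff {α ι : Type*}
    [MeasurableSpace α] {μ : Measure α} [IsFiniteMeasure μ] {L : Filter ι}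
    [L.IsCountablyGenerated] {A : Set α} {As : ι → Set α} (hA : MeasurableSet A)
    (hAs : ∀ i, MeasurableSet (As i)) (h_lim : ∀ᵐ x ∂μ, ∀ᶠ i in L, x ∈ As i ↔ x ∈ A) :
    Tendsto (fun i ↦ (μ (As i)).toReal) L (𝓝 (μ A).toReal) :=
  (ENNReal.tendsto_toReal (measure_ne_top μ A)).comp
    (tendsto_measure_of_ae_tendsto_indicator_of_isFiniteMeasure L hA hAs h_lim)

theorem tendsto_div_add_nhds_zero (a : ℝ) {b : ℝ} (hb : b ≠ 0) :
    Tendsto (fun w ↦ a / (b + w)) (𝓝 0) (𝓝 (a / b)) := by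
  have hcont : ContinuousAt (fun w : ℝ ↦ a / (b + w)) 0 :=
    continuousAt_const.div (continuousAt_const.add continuousAt_id) (by simpa using hb)
  simpa using hcont.tendsto

theorem tendsto_mul_div_add_atTop (a b : ℝ) :
    Tendsto (fun w ↦ w * (a / (b + w))) atTop (𝓝 a) := by
  have hlim : Tendsto (fun w ↦ a / (b / w + 1)) atTop (𝓝 a) := by
    have hbw : Tendsto (fun w : ℝ ↦ b / w + 1) atTop (𝓝 1) := by
      simpa using ((tendsto_const_nhds (x := b)).div_atTop tendsto_id).add_const 1
    have := (tendsto_const_nhds (x := a)).div hbw one_ne_zero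
    rwa [div_one] at this
  refine hlim.congr' ?_
  filter_upwards [eventually_gt_atTop 0, eventually_gt_atTop (-b)] with w hw hbw
  field_simp

theorem eventually_div_add_le_div_add_iff_nhds_zero {a b c d : ℝ} (hb : b ≠ 0) (hd : d ≠ 0)
    (h : a / b ≠ c / d) : ∀ᶠ w in 𝓝 0, (a / (b + w) ≤ c / (d + w) ↔ a / b ≤ c / d) :=
  (tendsto_div_add_nhds_zero a hb).eventually_le_iff (tendsto_div_add_nhds_zero c hd) h

theorem eventually_div_add_le_div_add_iff_atTop {a c : ℝ} (b d : ℝ) (h : a ≠ c) :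
    ∀ᶠ w in atTop, (a / (b + w) ≤ c / (d + w) ↔ a ≤ c) := by
  filter_upwards [(tendsto_mul_div_add_atTop a b).eventually_le_iff
    (tendsto_mul_div_add_atTop c d) h, eventually_gt_atTop 0] with w hw hpos
  rw [← hw, mul_le_mul_iff_right₀ hpos]

theorem stmt19_general {𝓧 : Type*} [MeasurableSpace 𝓧]
    {L : ℕ}
    (f : Fin L → 𝓧 → ℝ) (hfpos : ∀ b x, 0 < f b x)
    (hfmeas : ∀ b, Measurable (f b))
    (w : Fin L → ℝ) (hw : ∀ b, 0 < w b)
    (fbar : 𝓧 → ℝ) (hfbar : ∀ x, fbar x = ∑ b, w b * f b x)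
    (θ : Fin L)
    (Pθ : Measure 𝓧)
    [IsProbabilityMeasure Pθ]
    (πstar τ : 𝓧 → ℝ) (πt : ℝ → 𝓧 → ℝ)
    (hπstar : ∀ x, πstar x = (Pθ {z | f θ z / fbar z ≤ f θ x / fbar x}).toReal)
    (hτ : ∀ x, τ x = (Pθ {z | f θ z ≤ f θ x}).toReal)
    (hπt : ∀ w0 x, πt w0 x =
      (Pθ {z | f θ z / (fbar z + w0) ≤ f θ x / (fbar x + w0)}).toReal)
    (hcont1 : ∀ c : ℝ, Pθ {z | f θ z / fbar z = c} = 0)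
    (hcont2 : ∀ c : ℝ, Pθ {z | f θ z = c} = 0) :
    ∀ x, Tendsto (fun w0 => πt w0 x) atTop (nhds (τ x)) ∧
      Tendsto (fun w0 => πt w0 x) (nhdsWithin 0 (Set.Ioi 0)) (nhds (πstar x)) := by
  have hfbar_pos : ∀ x, 0 < fbar x := fun x ↦ by
    rw [hfbar]
    exact Finset.sum_pos (fun b _ ↦ mul_pos (hw b) (hfpos b x)) ⟨θ, Finset.mem_univ θ⟩
  have hfbar_meas : Measurable fbar := by
    rw [funext hfbar]
    fun_prop
  have hfθ_meas := hfmeas θ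
  intro x
  simp only [hπt, hτ, hπstar]
  have hsets : ∀ w0, MeasurableSet {z | f θ z / (fbar z + w0) ≤ f θ x / (fbar x + w0)} :=
    fun w0 ↦ measurableSet_le (by fun_prop) measurable_const
  constructor
  · refine tendsto_measure_toReal_of_ae_eventually_mem_iff
      (measurableSet_le hfθ_meas measurable_const) hsets ?_
    exact (measure_eq_zero_iff_ae_notMem.1 (hcont2 (f θ x))).mono fun z hz ↦
      eventually_div_add_le_div_add_iff_atTop _ _ hz
  · refine tendsto_measure_toReal_of_ae_eventually_mem_iff
      (measurableSet_le (by fun_prop) measurable_const) hsets ?_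
    exact (measure_eq_zero_iff_ae_notMem.1 (hcont1 _)).mono fun z hz ↦
      (eventually_div_add_le_div_add_iff_nhds_zero (hfbar_pos z).ne' (hfbar_pos x).ne'
        hz).filter_mono nhdsWithin_le_nhds

/-- the compromise p-value `π̃_θ^{w₀}` converges pointwise to
the typicality index as `w₀ → ∞` and to the optimal p-value as `w₀ ↓ 0`. -/
theorem stmt19 {𝓧 : Type*} [MeasurableSpace 𝓧]
    (M : Measure 𝓧) {L : ℕ}
    (f : Fin L → 𝓧 → ℝ) (hfpos : ∀ b x, 0 < f b x)
    (hfmeas : ∀ b, Measurable (f b))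
    (w : Fin L → ℝ) (hw : ∀ b, 0 < w b)
    (fbar : 𝓧 → ℝ) (hfbar : ∀ x, fbar x = ∑ b, w b * f b x)
    (θ : Fin L)
    (Pθ : Measure 𝓧)
    (hPθ : Pθ = M.withDensity fun x => ENNReal.ofReal (f θ x))
    [IsProbabilityMeasure Pθ]
    (πstar τ : 𝓧 → ℝ) (πt : ℝ → 𝓧 → ℝ)
    (hπstar : ∀ x, πstar x = (Pθ {z | f θ z / fbar z ≤ f θ x / fbar x}).toReal)
    (hτ : ∀ x, τ x = (Pθ {z | f θ z ≤ f θ x}).toReal)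
    (hπt : ∀ w0 x, πt w0 x =
      (Pθ {z | f θ z / (fbar z + w0) ≤ f θ x / (fbar x + w0)}).toReal)
    (hcont1 : ∀ c : ℝ, Pθ {z | f θ z / fbar z = c} = 0)
    (hcont2 : ∀ c : ℝ, Pθ {z | f θ z = c} = 0)
    (hcont3 : ∀ w0 : ℝ, 0 < w0 → ∀ c : ℝ, Pθ {z | f θ z / (fbar z + w0) = c} = 0) :
    ∀ x, Tendsto (fun w0 => πt w0 x) atTop (nhds (τ x)) ∧
      Tendsto (fun w0 => πt w0 x) (nhdsWithin 0 (Set.Ioi 0)) (nhds (πstar x)) :=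
  stmt19_general f hfpos hfmeas w hw fbar hfbar θ Pθ πstar τ πt hπstar hτ hπt hcont1 hcont2
end
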